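/- arXiv:2508.08708 — 2 statements merged into one kernel-verified Lean document; each statement's English description precedes it below -/
import Mathlib

section
/- Let α be irrational. The map F : W_α × ℝ → W_α × W_α, F(y,s) = (y, s·y), where W_α = (D×ℝ)/ℤ with action n·(z,t) = (z e^{2πinα}, t+n|z|²) and s·[z,t]=[z,t+s], is injective. -/
open Real Complex

/-- The ℤ-action `n · (z, t) = (z e^{2πinα}, t + n|z|²)` on `ℂ × ℝ` (restricting to `D × ℝ`). -/
noncomputable def warpAct (α : ℝ) (n : ℤ) (p : ℂ × ℝ) : ℂ × ℝ :=
  (p.1 * Complex.exp (2 * Real.pi * Complex.I * n * α), p.2 + n * ‖p.1‖ ^ 2)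

theorem stmt_10 (α : ℝ) (hα : Irrational α) (z z' : ℂ) (hz : ‖z‖ ≤ 1) (hz' : ‖z'‖ ≤ 1)
    (t t' s s' : ℝ)
    (h₁ : ∃ n : ℤ, (z', t') = warpAct α n (z, t))
    (h₂ : ∃ m : ℤ, (z', t' + s') = warpAct α m (z, t + s)) :
    s = s' := by
  obtain ⟨n, hn⟩ := h₁
  obtain ⟨m, hm⟩ := h₂
  simp only [warpAct, Prod.mk.injEq] at hn hm
  obtain ⟨hz1, ht1⟩ := hn
  obtain ⟨hz2, ht2⟩ := hm
  rcases eq_or_ne z 0 with rfl | hz0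
  · simp at ht1 ht2; linarith
  · have hmn : m = n := by
      have hexp : Complex.exp (2 * Real.pi * Complex.I * n * α)
          = Complex.exp (2 * Real.pi * Complex.I * m * α) :=
        mul_left_cancel₀ hz0 (hz1.symm.trans hz2)
      rw [Complex.exp_eq_exp_iff_exists_int] at hexp
      obtain ⟨k, hk⟩ := hexp
      have h2pi : (2 * Real.pi * Complex.I : ℂ) ≠ 0 := by
        simp [Real.pi_ne_zero, Complex.I_ne_zero]
      have hc : ((n : ℝ) * α : ℂ) = ((m * α + k : ℝ) : ℂ) := by
        apply mul_left_cancel₀ h2pi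
        push_cast
        push_cast at hk
        linear_combination hk
      have hr : (n : ℝ) * α = m * α + k := by exact_mod_cast hc
      by_contra hne
      have hnm : (n - m : ℝ) ≠ 0 := by
        have : (n : ℝ) ≠ m := by exact_mod_cast fun h => hne (by exact_mod_cast h.symm)
        exact sub_ne_zero.mpr this
      have : α = (k : ℝ) / (n - m) := by field_simp; linarith
      have : α = ((k / (n - m) : ℚ) : ℝ) := by push_cast; rw [this]
      exact hα ⟨_, this.symm⟩
    rw [hmn] at ht2
    have : t + n * ‖z‖ ^ 2 + s' = t + s + n * ‖z‖ ^ 2 := by rw [← ht1, ht2]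
    linarith
end

section
/- Let α be irrational and let w₁, w₂ : V → ℂ be continuous on an interval V with w₁(t) ≠ 0 for all t, and suppose for each t there exists m(t) ∈ ℤ with w₂(t) = w₁(t)·exp(2πi m(t) α). Then t ↦ m(t) is locally constant on V. -/
open Real Complex

/-- A countable preconnected set in a metric space is a subsingleton. -/
lemma countable_preconnected_subsingleton {X : Type*} [MetricSpace X] {S : Set X}
    (hS : IsPreconnected S) (hc : S.Countable) : S.Subsingleton := by
  intro a ha b hb
  by_contra hab
  have hd : (0 : ℝ) < dist a b := dist_pos.2 hab
  have hcont : ContinuousOn (fun z => dist z a) S := (continuous_id.dist continuous_const).continuousOn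
  have himg : IsPreconnected ((fun z => dist z a) '' S) := hS.image _ hcont
  have hoc : ((fun z => dist z a) '' S).OrdConnected := himg.ordConnected
  have hsub : Set.Icc (0 : ℝ) (dist a b) ⊆ (fun z => dist z a) '' S := by
    have h0 : (0 : ℝ) ∈ (fun z => dist z a) '' S := ⟨a, ha, by simp⟩
    have h1 : dist a b ∈ (fun z => dist z a) '' S := ⟨b, hb, by simp [dist_comm]⟩
    exact hoc.out h0 h1
  have hcnt : ((fun z => dist z a) '' S).Countable := hc.image _
  have hcnt' : (Set.Icc (0 : ℝ) (dist a b)).Countable := hcnt.mono hsub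
  have hmz : MeasureTheory.volume (Set.Icc (0 : ℝ) (dist a b)) = 0 :=
    hcnt'.measure_zero _
  rw [Real.volume_Icc] at hmz
  rw [ENNReal.ofReal_eq_zero] at hmz
  linarith

theorem stmt_13 (α : ℝ) (hα : Irrational α) (V : Set ℝ) (hV : IsOpen V)
    (hVconn : V.OrdConnected)
    (w₁ w₂ : ℝ → ℂ) (hw₁ : ContinuousOn w₁ V) (hw₂ : ContinuousOn w₂ V)
    (hne : ∀ t ∈ V, w₁ t ≠ 0)
    (m : ℝ → ℤ)
    (hm : ∀ t ∈ V, w₂ t = w₁ t * Complex.exp (2 * Real.pi * Complex.I * m t * α)) :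
    ∀ t ∈ V, ∃ U : Set ℝ, IsOpen U ∧ t ∈ U ∧ U ⊆ V ∧ ∀ u ∈ U, m u = m t := by
  intro t ht
  refine ⟨V, hV, ht, Set.Subset.refl _, fun u hu => ?_⟩
  -- the quotient function
  set q : ℝ → ℂ := fun s => w₂ s / w₁ s with hq
  have hqcont : ContinuousOn q V := hw₂.div hw₁ hne
  have hqval : ∀ s ∈ V, q s = Complex.exp (2 * Real.pi * Complex.I * m s * α) := by
    intro s hs
    rw [hq]
    simp only
    rw [hm s hs]
    exact mul_div_cancel_left₀ _ (hne s hs)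
  -- the image of q is countable
  have hcnt : (q '' V).Countable := by
    have : q '' V ⊆ Set.range (fun k : ℤ => Complex.exp (2 * Real.pi * Complex.I * k * α)) := by
      rintro z ⟨s, hs, rfl⟩
      exact ⟨m s, (hqval s hs).symm⟩
    exact Set.Countable.mono this (Set.countable_range _)
  have hpc : IsPreconnected (q '' V) := (hVconn.isPreconnected).image q hqcont
  have hsub : (q '' V).Subsingleton := countable_preconnected_subsingleton hpc hcnt
  have hqeq : q u = q t := hsub ⟨u, hu, rfl⟩ ⟨t, ht, rfl⟩
  rw [hqval u hu, hqval t ht] at hqeq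
  rw [Complex.exp_eq_exp_iff_exists_int] at hqeq
  obtain ⟨n, hn⟩ := hqeq
  -- derive real equation
  have h2 : (2 * Real.pi * Complex.I) * ((m u : ℂ) * α - (m t : ℂ) * α - n) = 0 := by
    ring_nf
    ring_nf at hn
    linear_combination hn
  have hI : (2 * Real.pi * Complex.I) ≠ 0 := by
    simp [Complex.I_ne_zero, Real.pi_ne_zero]
  have h3 : (m u : ℂ) * α - (m t : ℂ) * α - n = 0 := by
    rcases mul_eq_zero.1 h2 with h | h
    · exact absurd h hI
    · exact h
  have h4 : ((m u : ℝ) * α - (m t : ℝ) * α - n : ℝ) = 0 := by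
    exact_mod_cast h3
  by_contra hmeq
  have hd : (m u - m t : ℤ) ≠ 0 := sub_ne_zero.2 hmeq
  have : Irrational ((m u - m t : ℤ) * α) := hα.intCast_mul hd
  have heq : ((m u - m t : ℤ) : ℝ) * α = (n : ℤ) := by push_cast; linarith
  exact (this.ne_int n) heq
end
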